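/- arXiv:2005.04154 — 2 statements merged into one kernel-verified Lean document; each statement's English description precedes it below -/
import Mathlib

section
/- Let K ≥ 1 and let X, Y_1, …, Y_K be independent real-valued random variables, where X is exponentially distributed with rate a > 0 and each Y_i is exponentially distributed with rate b_i > 0, the rates b_1, …, b_K being pairwise distinct. Let p_0 > 0 be a constant. Then the random variable R = X / (Y_1 + ⋯ + Y_K + p_0) has a probability density function with respect to Lebesgue measure given, for r ≥ 0, by f_R(r) = Σ_{i=1}^{K} a · b_i · A_i · e^{−a p_0 r} · ((a r + b_i) p_0 + 1) / (a r + b_i)², where A_i = ∏_{l ≠ i} b_l / (b_l − b_i). -/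
/-!
Write `T = Y₁ + ⋯ + Y_K`, which is independent of `X`. For `r ≥ 0`, integrating out `X` gives
`ℙ(R > r) = ℙ(X > r (T + p₀)) = e^{-a p₀ r} 𝔼[e^{-a r T}] = e^{-a p₀ r} ∏ᵢ bᵢ / (a r + bᵢ)`.
Evaluating the Lagrange identity `∑ᵢ ∏_{l ≠ i} (x + b_l) / (b_l - bᵢ) = 1` turns the product into
the partial-fraction sum `∑ᵢ Aᵢ bᵢ / (x + bᵢ)`, and differentiating that sum termwise yields the
stated density. It is nonnegative because the tail is antitone.
-/

open MeasureTheory ProbabilityTheory Finset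
open Real Filter Topology

section PartialFractions

variable {ι F : Type*} [Fintype ι] [DecidableEq ι] [Nonempty ι] [Field F] {b : ι → F}

theorem sum_prod_erase_add_div_sub_eq_one (hb : Function.Injective b) (x : F) :
    ∑ i, ∏ l ∈ univ.erase i, (x + b l) / (b l - b i) = 1 := by
  have hsum := congrArg (Polynomial.eval x)
    (Lagrange.sum_basis (v := fun i => -b i) (neg_injective.comp hb).injOn univ_nonempty)
  rw [Polynomial.eval_finsetSum, Polynomial.eval_one] at hsum
  rw [← hsum]
  refine sum_congr rfl fun i _ => ?_
  rw [Lagrange.basis, Polynomial.eval_prod]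
  refine prod_congr rfl fun l _ => ?_
  simp only [Lagrange.basisDivisor, Polynomial.eval_mul, Polynomial.eval_C, Polynomial.eval_sub,
    Polynomial.eval_X]
  rw [div_eq_inv_mul]
  congr 1 <;> ring

theorem prod_div_add_eq_sum (hb : Function.Injective b) {x : F} (hx : ∀ i, x + b i ≠ 0) :
    ∏ i, b i / (x + b i) =
      ∑ i, (∏ l ∈ univ.erase i, b l / (b l - b i)) * (b i / (x + b i)) := by
  calc ∏ i, b i / (x + b i)
      = ∑ i, (∏ l ∈ univ.erase i, (x + b l) / (b l - b i)) * ∏ l, b l / (x + b l) := by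
        rw [← sum_mul, sum_prod_erase_add_div_sub_eq_one hb, one_mul]
    _ = _ := by
        refine sum_congr rfl fun i _ => ?_
        have hsplit : ∀ l ∈ univ.erase i,
            b l / (b l - b i) = (x + b l) / (b l - b i) * (b l / (x + b l)) := fun l _ => by
          rw [div_mul_div_comm, mul_comm (x + b l), mul_div_mul_right _ _ (hx l)]
        rw [prod_congr rfl hsplit, prod_mul_distrib,
          ← mul_prod_erase univ (fun l => b l / (x + b l)) (mem_univ i)]
        ring

end PartialFractions

section SINRLaw

variable {ι : Type*} [Fintype ι] (a p0 : ℝ) (b : ι → ℝ)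

/-- `ℙ(R > r)` for `r ≥ 0`. -/
noncomputable def sinrTail (r : ℝ) : ℝ := exp (-(a * p0 * r)) * ∏ i, b i / (a * r + b i)

noncomputable def sinrDensity [DecidableEq ι] (r : ℝ) : ℝ :=
  ∑ i, a * b i * (∏ l ∈ univ.erase i, b l / (b l - b i)) *
    exp (-(a * p0 * r)) * ((a * r + b i) * p0 + 1) / (a * r + b i) ^ 2

variable {a p0 b}

theorem sinrTail_zero (hb0 : ∀ i, b i ≠ 0) : sinrTail a p0 b 0 = 1 := by
  simp [sinrTail, div_self (hb0 _)]

theorem sinrTail_nonneg (ha : 0 ≤ a) (hb0 : ∀ i, 0 < b i) {r : ℝ} (hr : 0 ≤ r) :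
    0 ≤ sinrTail a p0 b r :=
  mul_nonneg (exp_pos _).le <| prod_nonneg fun i _ => by have := hb0 i; positivity

theorem sinrTail_antitoneOn (ha : 0 ≤ a) (hp0 : 0 ≤ p0) (hb0 : ∀ i, 0 < b i) :
    AntitoneOn (sinrTail a p0 b) (Set.Ici 0) := by
  intro r (hr : 0 ≤ r) s (hs : 0 ≤ s) hrs
  refine mul_le_mul (exp_le_exp.mpr ?_) ?_ (prod_nonneg fun i _ => ?_) (exp_pos _).le
  · nlinarith [mul_nonneg ha hp0]
  · refine prod_le_prod (fun i _ => ?_) fun i _ => ?_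
    · have := hb0 i; positivity
    · have := hb0 i
      gcongr
  · have := hb0 i; positivity

theorem sinrTail_eq_sum [DecidableEq ι] [Nonempty ι] (hb : Function.Injective b) {r : ℝ}
    (hr : ∀ i, a * r + b i ≠ 0) :
    sinrTail a p0 b r =
      ∑ i, (∏ l ∈ univ.erase i, b l / (b l - b i)) * b i *
        (exp (-(a * p0 * r)) / (a * r + b i)) := by
  rw [sinrTail, prod_div_add_eq_sum hb hr, mul_sum]
  refine sum_congr rfl fun i _ => ?_
  ring

theorem hasDerivAt_sinrTail [DecidableEq ι] [Nonempty ι] (ha : 0 ≤ a) (hb0 : ∀ i, 0 < b i)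
    (hb : Function.Injective b) {r : ℝ} (hr : 0 ≤ r) :
    HasDerivAt (sinrTail a p0 b) (-sinrDensity a p0 b r) r := by
  have hpos : ∀ i, 0 < a * r + b i := fun i => by have := hb0 i; positivity
  have hsum : HasDerivAt (fun u => ∑ i, (∏ l ∈ univ.erase i, b l / (b l - b i)) * b i *
      (exp (-(a * p0 * u)) / (a * u + b i))) (-sinrDensity a p0 b r) r := by
    rw [sinrDensity, ← sum_neg_distrib]
    refine HasDerivAt.fun_sum fun i _ => ?_
    have hexp : HasDerivAt (fun u => exp (-(a * p0 * u))) (exp (-(a * p0 * r)) * -(a * p0)) r :=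
      ((hasDerivAt_id r).const_mul (a * p0)).neg.exp.congr_deriv (by simp)
    have hlin : HasDerivAt (fun u => a * u + b i) a r := by
      simpa using ((hasDerivAt_id r).const_mul a).add_const (b i)
    refine ((hexp.fun_div hlin (hpos i).ne').const_mul
      ((∏ l ∈ univ.erase i, b l / (b l - b i)) * b i)).congr_deriv ?_
    field_simp
    ring
  have hnear : ∀ᶠ u in 𝓝 r, ∀ i, a * u + b i ≠ 0 :=
    eventually_all.mpr fun i => (continuous_const.mul continuous_id |>.add continuous_const
      |>.continuousAt.eventually_ne (hpos i).ne')
  exact hsum.congr_of_eventuallyEq (hnear.mono fun u hu => sinrTail_eq_sum hb hu)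

theorem sinrDensity_nonneg [DecidableEq ι] [Nonempty ι] (ha : 0 ≤ a) (hp0 : 0 ≤ p0)
    (hb0 : ∀ i, 0 < b i) (hb : Function.Injective b) {r : ℝ} (hr : 0 ≤ r) :
    0 ≤ sinrDensity a p0 b r := by
  have hacc : AccPt r (𝓟 (Set.Ici r)) := by
    rw [accPt_principal_iff_nhdsWithin, Set.Ici_sdiff_left]
    infer_instance
  have := (hasDerivAt_sinrTail ha hb0 hb hr).hasDerivWithinAt.nonpos_of_antitoneOn hacc
    ((sinrTail_antitoneOn ha hp0 hb0).mono (Set.Ici_subset_Ici.mpr hr))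
  linarith

theorem continuousOn_sinrDensity [DecidableEq ι] (ha : 0 ≤ a) (hb0 : ∀ i, 0 < b i) :
    ContinuousOn (sinrDensity a p0 b) (Set.Ici 0) := by
  refine continuousOn_finsetSum _ fun i _ => ContinuousOn.div (by fun_prop) (by fun_prop) ?_
  intro r (hr : 0 ≤ r)
  have := hb0 i
  positivity

end SINRLaw

theorem eq_withDensity_of_hasDerivAt_cdf {ν : Measure ℝ} [IsFiniteMeasure ν] {F f : ℝ → ℝ}
    (hνF : ∀ r, 0 ≤ r → ν (Set.Iic r) = ENNReal.ofReal (F r))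
    (hF0 : F 0 = 0) (hF : ∀ r, 0 ≤ r → HasDerivAt F (f r) r)
    (hf : ContinuousOn f (Set.Ici 0)) (hf0 : ∀ r, 0 ≤ r → 0 ≤ f r) :
    ν = volume.withDensity ((Set.Ici 0).indicator fun r => ENNReal.ofReal (f r)) := by
  refine Measure.ext_of_Iic _ _ fun r => ?_
  rw [withDensity_apply _ measurableSet_Iic, lintegral_indicator measurableSet_Ici,
    Measure.restrict_restrict measurableSet_Ici, Set.Ici_inter_Iic]
  rcases lt_or_ge r 0 with hr | hr
  · rw [Set.Icc_eq_empty (by linarith), Measure.restrict_empty, lintegral_zero_measure]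
    exact measure_mono_null (Set.Iic_subset_Iic.mpr hr.le)
      (by rw [hνF 0 le_rfl, hF0, ENNReal.ofReal_zero])
  · have hfr : ContinuousOn f (Set.Icc 0 r) := hf.mono Set.Icc_subset_Ici_self
    rw [hνF r hr, ← ofReal_integral_eq_lintegral_ofReal hfr.integrableOn_Icc
      (ae_restrict_of_forall_mem measurableSet_Icc fun x hx => hf0 x hx.1),
      integral_Icc_eq_integral_Ioc, ← intervalIntegral.integral_of_le hr,
      intervalIntegral.integral_eq_sub_of_hasDerivAt (fun x hx => hF x ?_)
        (hfr.intervalIntegrable_of_Icc hr), hF0, sub_zero]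
    exact (Set.uIcc_of_le hr ▸ hx).1

section Exponential

variable {c : ℝ}

theorem ae_nonneg_expMeasure (hc : 0 < c) : ∀ᵐ x ∂expMeasure c, 0 ≤ x := by
  have := isProbabilityMeasure_expMeasure hc
  have hsub : {x : ℝ | ¬ 0 ≤ x} ⊆ Set.Iic 0 := fun x hx => (not_le.mp hx).le
  refine ae_iff.mpr (measure_mono_null hsub ?_)
  rw [← ofReal_cdf, cdf_expMeasure_eq hc, if_pos le_rfl]
  simp

theorem expMeasure_Ioi (hc : 0 < c) {x : ℝ} (hx : 0 ≤ x) :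
    expMeasure c (Set.Ioi x) = ENNReal.ofReal (exp (-(c * x))) := by
  have := isProbabilityMeasure_expMeasure hc
  have hle : ENNReal.ofReal (exp (-(c * x))) ≤ 1 :=
    ENNReal.ofReal_le_one.mpr (exp_le_one_iff.mpr (by nlinarith))
  rw [← Set.compl_Iic, prob_compl_eq_one_sub measurableSet_Iic, ← ofReal_cdf,
    cdf_expMeasure_eq hc, if_pos hx, ENNReal.ofReal_sub _ (exp_pos _).le, ENNReal.ofReal_one,
    ENNReal.sub_sub_cancel ENNReal.one_ne_top hle]

theorem lintegral_exp_neg_mul_expMeasure (hc : 0 < c) {t : ℝ} (ht : 0 < t + c) :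
    ∫⁻ x, ENNReal.ofReal (exp (-(t * x))) ∂expMeasure c = ENNReal.ofReal (c / (t + c)) := by
  have hpdf : Measurable (exponentialPDF c) := (measurable_exponentialPDFReal c).ennreal_ofReal
  rw [show expMeasure c = volume.withDensity (exponentialPDF c) from rfl,
    lintegral_withDensity_eq_lintegral_mul _ hpdf (by fun_prop)]
  have hfactor : ∀ x, (exponentialPDF c * fun x => ENNReal.ofReal (exp (-(t * x)))) x =
      ENNReal.ofReal (c / (t + c)) * exponentialPDF (t + c) x := by
    intro x
    simp only [Pi.mul_apply, exponentialPDF_eq]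
    rw [← ENNReal.ofReal_mul (by split_ifs <;> positivity), ← ENNReal.ofReal_mul (by positivity)]
    split_ifs
    · rw [mul_assoc, ← exp_add]
      field_simp
      ring_nf
    · simp
  rw [lintegral_congr hfactor, lintegral_const_mul' _ _ ENNReal.ofReal_ne_top,
    lintegral_exponentialPDF_eq_one ht, mul_one]

end Exponential

section RandomVariables

variable {Ω : Type*} [MeasurableSpace Ω] {μ : Measure Ω} {c : ℝ}

theorem lintegral_exp_neg_mul_of_map_eq_expMeasure {W : Ω → ℝ} (hW : Measurable W)
    (hWc : μ.map W = expMeasure c) (hc : 0 < c) {t : ℝ} (ht : 0 < t + c) :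
    ∫⁻ ω, ENNReal.ofReal (exp (-(t * W ω))) ∂μ = ENNReal.ofReal (c / (t + c)) := by
  rw [← lintegral_exp_neg_mul_expMeasure hc ht, ← hWc, lintegral_map (by fun_prop) hW]

theorem lintegral_exp_neg_mul_sum_of_iIndepFun {ι : Type*} [Fintype ι] {Y : ι → Ω → ℝ}
    {b : ι → ℝ} (hY : iIndepFun Y μ) (hYm : ∀ i, Measurable (Y i))
    (hYb : ∀ i, μ.map (Y i) = expMeasure (b i)) (hb : ∀ i, 0 < b i) {t : ℝ} (ht : 0 ≤ t) :
    ∫⁻ ω, ENNReal.ofReal (exp (-(t * ∑ i, Y i ω))) ∂μ = ∏ i, ENNReal.ofReal (b i / (t + b i)) := by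
  have hfactor : ∀ ω, ENNReal.ofReal (exp (-(t * ∑ i, Y i ω))) =
      ∏ i, ENNReal.ofReal (exp (-(t * Y i ω))) := fun ω => by
    rw [← ENNReal.ofReal_prod_of_nonneg fun i _ => (exp_pos _).le, ← exp_sum, mul_sum,
      sum_neg_distrib]
  have hind : iIndepFun (fun i ω => ENNReal.ofReal (exp (-(t * Y i ω)))) μ :=
    hY.comp (fun _ y => ENNReal.ofReal (exp (-(t * y)))) fun _ => by fun_prop
  rw [lintegral_congr hfactor,
    lintegral_prod_eq_prod_lintegral_of_indepFun univ _ hind fun i => by fun_prop]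
  exact prod_congr rfl fun i _ =>
    lintegral_exp_neg_mul_of_map_eq_expMeasure (hYm i) (hYb i) (hb i) (by linarith [hb i])

theorem measure_lt_of_indepFun_of_map_eq_expMeasure [IsFiniteMeasure μ] {Z X : Ω → ℝ}
    (hZ : Measurable Z) (hX : Measurable X) (hZX : IndepFun Z X μ) (hZ0 : ∀ᵐ ω ∂μ, 0 ≤ Z ω)
    (hXc : μ.map X = expMeasure c) (hc : 0 < c) :
    μ {ω | Z ω < X ω} = ∫⁻ ω, ENNReal.ofReal (exp (-(c * Z ω))) ∂μ := by
  have hs : MeasurableSet {p : ℝ × ℝ | p.1 < p.2} := measurableSet_lt measurable_fst measurable_snd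
  calc μ {ω | Z ω < X ω} = μ.map (fun ω => (Z ω, X ω)) {p | p.1 < p.2} :=
        (Measure.map_apply (hZ.prodMk hX) hs).symm
    _ = ∫⁻ z, expMeasure c (Set.Ioi z) ∂μ.map Z := by
        rw [(indepFun_iff_map_prod_eq_prod_map_map hZ.aemeasurable hX.aemeasurable).mp hZX,
          Measure.prod_apply hs, hXc]
        rfl
    _ = ∫⁻ z, ENNReal.ofReal (exp (-(c * z))) ∂μ.map Z :=
        lintegral_congr_ae <| by
          filter_upwards [(ae_map_iff hZ.aemeasurable measurableSet_Ici).mpr hZ0] with z hz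
          exact expMeasure_Ioi hc hz
    _ = _ := lintegral_map (by fun_prop) hZ

theorem ProbabilityTheory.iIndepFun.indepFun_sum_of_cons {K : ℕ} {X : Ω → ℝ}
    {Y : Fin K → Ω → ℝ} (h : iIndepFun (Fin.cons X Y : Fin (K + 1) → Ω → ℝ) μ) (hX : Measurable X)
    (hY : ∀ i, Measurable (Y i)) :
    IndepFun (fun ω => ∑ i, Y i ω) X μ := by
  have hm : ∀ j, Measurable ((Fin.cons X Y : Fin (K + 1) → Ω → ℝ) j) := Fin.cases hX hY
  have := h.indepFun_finsetSum_of_notMem hm (s := univ.map (Fin.succEmb K)) (i := 0) (by simp)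
  simpa [Finset.sum_map, ← Finset.sum_apply] using this

theorem measure_lt_div_sum_add [IsFiniteMeasure μ] {ι : Type*} [Fintype ι] {a p0 : ℝ}
    {b : ι → ℝ} {X : Ω → ℝ} {Y : ι → Ω → ℝ} (hX : Measurable X) (hY : ∀ i, Measurable (Y i))
    (hYind : iIndepFun Y μ) (hind : IndepFun (fun ω => ∑ i, Y i ω) X μ)
    (hXa : μ.map X = expMeasure a) (hYb : ∀ i, μ.map (Y i) = expMeasure (b i)) (ha : 0 < a)
    (hb : ∀ i, 0 < b i) (hp0 : 0 < p0) {r : ℝ} (hr : 0 ≤ r) :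
    μ {ω | r < X ω / (∑ i, Y i ω + p0)} = ENNReal.ofReal (sinrTail a p0 b r) := by
  have hT0 : ∀ᵐ ω ∂μ, 0 ≤ ∑ i, Y i ω := by
    have hY0 : ∀ i, ∀ᵐ ω ∂μ, 0 ≤ Y i ω := fun i =>
      (ae_map_iff (hY i).aemeasurable measurableSet_Ici).mp (hYb i ▸ ae_nonneg_expMeasure (hb i))
    filter_upwards [ae_all_iff.mpr hY0] with ω hω
    exact sum_nonneg fun i _ => hω i
  have hevent : {ω | r < X ω / (∑ i, Y i ω + p0)} =ᵐ[μ] {ω | r * (∑ i, Y i ω + p0) < X ω} := by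
    filter_upwards [hT0] with ω hω
    exact propext (lt_div_iff₀ (by linarith))
  have hexp : ∀ ω, ENNReal.ofReal (exp (-(a * (r * (∑ i, Y i ω + p0))))) =
      ENNReal.ofReal (exp (-(a * p0 * r))) * ENNReal.ofReal (exp (-(a * r * ∑ i, Y i ω))) :=
    fun ω => by
      rw [← ENNReal.ofReal_mul (exp_pos _).le, ← exp_add]
      ring_nf
  have hZX : IndepFun (fun ω => r * (∑ i, Y i ω + p0)) X μ :=
    hind.comp (φ := fun t => r * (t + p0)) (by fun_prop) measurable_id
  rw [measure_congr hevent, measure_lt_of_indepFun_of_map_eq_expMeasure (by fun_prop) hX hZX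
      (hT0.mono fun ω h => by positivity) hXa ha,
    lintegral_congr hexp, lintegral_const_mul' _ _ ENNReal.ofReal_ne_top,
    lintegral_exp_neg_mul_sum_of_iIndepFun hYind hY hYb hb (by positivity), sinrTail,
    ENNReal.ofReal_mul (exp_pos _).le,
    ENNReal.ofReal_prod_of_nonneg fun i _ => by have := hb i; positivity]

end RandomVariables

/-- Proposition 1 of the paper: if `X ~ Exp(a)` and `Y i ~ Exp(b i)` are independent with
pairwise distinct positive rates `b i`, and `p₀ > 0`, then the SINR
`R = X / (Y 1 + ⋯ + Y K + p₀)` has a pdf w.r.t. Lebesgue measure given, for `r ≥ 0`, by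
`∑ i, a * b i * A i * exp (-(a p₀ r)) * ((a r + b i) p₀ + 1) / (a r + b i)²`,
where `A i = ∏_{l ≠ i} b l / (b l - b i)`. -/
theorem stmt_0 {Ω : Type*} [MeasurableSpace Ω] (μ : Measure Ω) [IsProbabilityMeasure μ]
    (K : ℕ) (hK : 1 ≤ K) (a : ℝ) (ha : 0 < a) (b : Fin K → ℝ)
    (hpos : ∀ i, 0 < b i) (hdist : Function.Injective b)
    (p0 : ℝ) (hp0 : 0 < p0)
    (X : Ω → ℝ) (hXmeas : Measurable X)
    (Y : Fin K → Ω → ℝ) (hYmeas : ∀ i, Measurable (Y i))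
    (hindep : iIndepFun (Fin.cons X Y : Fin (K + 1) → Ω → ℝ) μ)
    (hXdist : Measure.map X μ = expMeasure a)
    (hYdist : ∀ i, Measure.map (Y i) μ = expMeasure (b i))
    (R : Ω → ℝ) (hR : ∀ ω, R ω = X ω / (∑ i : Fin K, Y i ω + p0)) :
    HasPDF R μ volume ∧
      ∀ᵐ r ∂(volume.restrict (Set.Ici (0 : ℝ))),
        pdf R μ volume r =
          ENNReal.ofReal (∑ i : Fin K,
            a * b i * (∏ l ∈ Finset.univ.erase i, b l / (b l - b i)) *
              Real.exp (-(a * p0 * r)) * ((a * r + b i) * p0 + 1) / (a * r + b i) ^ 2) := by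
  have : Nonempty (Fin K) := ⟨⟨0, hK⟩⟩
  have hRm : Measurable R := (funext hR : R = _) ▸ by fun_prop
  have hcdf : ∀ r, 0 ≤ r → μ.map R (Set.Iic r) = ENNReal.ofReal (1 - sinrTail a p0 b r) := by
    intro r hr
    have := Measure.isProbabilityMeasure_map (μ := μ) hRm.aemeasurable
    have hevent : R ⁻¹' Set.Ioi r = {ω | r < X ω / (∑ i, Y i ω + p0)} := by ext; simp [hR]
    rw [← Set.compl_Ioi, prob_compl_eq_one_sub measurableSet_Ioi,
      Measure.map_apply hRm measurableSet_Ioi, hevent,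
      measure_lt_div_sum_add hXmeas hYmeas (hindep.precomp (g := Fin.succ) (Fin.succ_injective K))
        (hindep.indepFun_sum_of_cons hXmeas hYmeas) hXdist hYdist ha hpos hp0 hr,
      ENNReal.ofReal_sub _ (sinrTail_nonneg ha.le hpos hr), ENNReal.ofReal_one]
  set g := (Set.Ici 0).indicator fun r => ENNReal.ofReal (sinrDensity a p0 b r) with hg
  have hmap : μ.map R = volume.withDensity g :=
    eq_withDensity_of_hasDerivAt_cdf hcdf (by rw [sinrTail_zero fun i => (hpos i).ne', sub_self])
      (fun r hr => by simpa using (hasDerivAt_sinrTail ha.le hpos hdist hr).const_sub 1)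
      (continuousOn_sinrDensity ha.le hpos)
      fun r hr => sinrDensity_nonneg ha.le hp0.le hpos hdist hr
  have hg_meas : AEMeasurable g := (aemeasurable_indicator_iff measurableSet_Ici).mpr
    ((continuousOn_sinrDensity ha.le hpos).aemeasurable measurableSet_Ici).ennreal_ofReal
  have hpdf := hasPDF_of_map_eq_withDensity hRm.aemeasurable g hg_meas hmap
  refine ⟨hpdf, ?_⟩
  filter_upwards [ae_restrict_of_ae ((pdf.eq_of_map_eq_withDensity g hg_meas).mp hmap),
    ae_restrict_mem measurableSet_Ici] with r hr hr0
  rw [hr, hg, Set.indicator_of_mem hr0]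
  rfl
end

section
/- Let a > 0, p_0 > 0, let K ≥ 1, and let b_1, …, b_K be pairwise distinct positive reals with A_i = ∏_{l ≠ i} b_l / (b_l − b_i). Then ∫_0^∞ Σ_{i=1}^{K} a · b_i · A_i · e^{−a p_0 r} · ((a r + b_i) p_0 + 1) / (a r + b_i)² dr = 1. -/
/-!
The `i`-th term is `b_i A_i` times the derivative of `-e^{-a p₀ r} / (a r + b_i)`, so it integrates
to `A_i`; and `∑ A_i = 1` is the Lagrange partition of unity `∑ ℓ_i = 1` evaluated at `0`.
-/

open Finset Real MeasureTheory Filter Topology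

theorem sum_prod_erase_div_sub_eq_one {F ι : Type*} [Field F] [DecidableEq ι] {s : Finset ι}
    {v : ι → F} (hvs : Set.InjOn v s) (hs : s.Nonempty) :
    ∑ i ∈ s, ∏ l ∈ s.erase i, v l / (v l - v i) = 1 := by
  have h := congrArg (Polynomial.eval 0) (Lagrange.sum_basis hvs hs)
  rw [Polynomial.eval_finsetSum, Polynomial.eval_one] at h
  rw [← h]
  refine sum_congr rfl fun i _ => ?_
  rw [Lagrange.basis, Polynomial.eval_prod]
  refine prod_congr rfl fun l _ => ?_
  simp only [Lagrange.basisDivisor, Polynomial.eval_mul, Polynomial.eval_C, Polynomial.eval_sub,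
    Polynomial.eval_X]
  rw [div_eq_mul_inv, ← neg_sub (v i) (v l), inv_neg]
  ring

section SINRKernel

variable {a c β : ℝ}

noncomputable def sinrKernel (a c β r : ℝ) : ℝ :=
  a * exp (-(a * c * r)) * ((a * r + β) * c + 1) / (a * r + β) ^ 2

theorem hasDerivAt_sinrKernel_primitive {r : ℝ} (hr : a * r + β ≠ 0) :
    HasDerivAt (fun x => -(exp (-(a * c * x)) / (a * x + β))) (sinrKernel a c β r) r := by
  have hexp : HasDerivAt (fun x => exp (-(a * c * x))) (exp (-(a * c * r)) * -(a * c)) r := by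
    simpa using (((hasDerivAt_id r).const_mul (a * c)).neg).exp
  have hlin : HasDerivAt (fun x => a * x + β) a r := by
    simpa using ((hasDerivAt_id r).const_mul a).add_const β
  refine (hexp.div hlin hr).neg.congr_deriv ?_
  rw [sinrKernel]
  field_simp
  ring

theorem sinrKernel_nonneg (ha : 0 < a) (hc : 0 ≤ c) (hβ : 0 < β) {r : ℝ} (hr : 0 ≤ r) :
    0 ≤ sinrKernel a c β r := by
  unfold sinrKernel
  have : 0 < a * r + β := by positivity
  positivity

theorem tendsto_sinrKernel_primitive_atTop (ha : 0 < a) (hc : 0 ≤ c) :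
    Tendsto (fun x => -(exp (-(a * c * x)) / (a * x + β))) atTop (𝓝 0) := by
  have hden : Tendsto (fun x => (a * x + β)⁻¹) atTop (𝓝 0) :=
    (tendsto_atTop_add_const_right _ β (tendsto_id.const_mul_atTop ha)).inv_tendsto_atTop
  have hexp : IsBoundedUnder (· ≤ ·) atTop fun x => ‖exp (-(a * c * x))‖ := by
    refine isBoundedUnder_of_eventually_le (a := 1) ?_
    filter_upwards [eventually_ge_atTop 0] with x hx
    rw [norm_of_nonneg (exp_pos _).le, exp_le_one_iff]
    have : 0 ≤ a * c * x := by positivity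
    linarith
  simpa [div_eq_mul_inv, mul_comm] using (hden.zero_mul_isBoundedUnder_le hexp).neg

theorem integrableOn_sinrKernel (ha : 0 < a) (hc : 0 ≤ c) (hβ : 0 < β) :
    IntegrableOn (sinrKernel a c β) (Set.Ioi 0) :=
  integrableOn_Ioi_deriv_of_nonneg'
    (fun r hr => hasDerivAt_sinrKernel_primitive (by have : (0 : ℝ) ≤ r := hr; positivity))
    (fun r hr => sinrKernel_nonneg ha hc hβ (le_of_lt hr)) (tendsto_sinrKernel_primitive_atTop ha hc)

theorem integral_sinrKernel (ha : 0 < a) (hc : 0 ≤ c) (hβ : 0 < β) :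
    ∫ r in Set.Ioi 0, sinrKernel a c β r = β⁻¹ := by
  rw [integral_Ioi_of_hasDerivAt_of_nonneg'
    (fun r hr => hasDerivAt_sinrKernel_primitive (by have : (0 : ℝ) ≤ r := hr; positivity))
    (fun r hr => sinrKernel_nonneg ha hc hβ (le_of_lt hr)) (tendsto_sinrKernel_primitive_atTop ha hc)]
  simp

end SINRKernel

/-- The SINR density of Proposition 1 integrates to one. -/
theorem stmt_9 (a p0 : ℝ) (ha : 0 < a) (hp0 : 0 < p0)
    (K : ℕ) (hK : 1 ≤ K) (b : Fin K → ℝ)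
    (hpos : ∀ i, 0 < b i) (hdist : Function.Injective b) :
    ∫ r in Set.Ioi (0 : ℝ),
        ∑ i : Fin K,
          a * b i * (∏ l ∈ Finset.univ.erase i, b l / (b l - b i)) *
            Real.exp (-(a * p0 * r)) * ((a * r + b i) * p0 + 1) / (a * r + b i) ^ 2 = 1 := by
  have hterm : ∀ i r (A : ℝ), a * b i * A * exp (-(a * p0 * r)) * ((a * r + b i) * p0 + 1) /
      (a * r + b i) ^ 2 = b i * A * sinrKernel a p0 (b i) r := fun i r A => by
    rw [sinrKernel]; ring
  simp_rw [hterm]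
  rw [integral_finsetSum _ fun i _ => (integrableOn_sinrKernel ha hp0.le (hpos i)).const_mul _]
  have hne : (univ : Finset (Fin K)).Nonempty := univ_nonempty_iff.mpr ⟨⟨0, hK⟩⟩
  calc ∑ i, ∫ r in Set.Ioi 0, b i * (∏ l ∈ univ.erase i, b l / (b l - b i)) *
        sinrKernel a p0 (b i) r
      = ∑ i, ∏ l ∈ univ.erase i, b l / (b l - b i) := sum_congr rfl fun i _ => by
        rw [integral_const_mul, integral_sinrKernel ha hp0.le (hpos i)]
        field_simp [(hpos i).ne']
    _ = 1 := sum_prod_erase_div_sub_eq_one hdist.injOn hne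
end
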